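/- Let x_1 and x_2 be two minimizers of F(x) = (1/2)\|y - Bx\|_2^2 + \lambda\|x\|_1 with \lambda > 0. Suppose x_1 vanishes on an index set G, and there exists a subgradient z_1 of \|\cdot\|_1 at x_1 satisfying the optimality condition B^T B x_1 - B^T y + \lambda z_1 = 0 with |z_{1,i}| < 1 for all i \in G. Then x_2 also vanishes on G: x_{2,i} = 0 for all i \in G. -/
import Mathlib


/-- The Lasso objective `F(x) = (1/2)‖y - Bx‖₂² + λ‖x‖₁`. -/
noncomputable def lassoObjective {N d : ℕ} (B : Matrix (Fin N) (Fin d) ℝ)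
    (y : Fin N → ℝ) (lam : ℝ) (x : Fin d → ℝ) : ℝ :=
  (1 / 2) * ∑ i, (y i - B.mulVec x i) ^ 2 + lam * ∑ j, |x j|

/-- If `x₁` and `x₂` both minimize the Lasso objective, `x₁` vanishes on an index
set `G`, and some subgradient `z₁` of the `ℓ¹` norm at `x₁` satisfies the
optimality condition `BᵀB x₁ - Bᵀy + λ z₁ = 0` with `|z₁ᵢ| < 1` for `i ∈ G`, then
`x₂` also vanishes on `G`. -/
theorem lasso_shared_zero_support {N d : ℕ} (B : Matrix (Fin N) (Fin d) ℝ)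
    (y : Fin N → ℝ) (lam : ℝ) (hlam : 0 < lam) (x₁ x₂ : Fin d → ℝ) (G : Set (Fin d))
    (h₁ : ∀ x : Fin d → ℝ, lassoObjective B y lam x₁ ≤ lassoObjective B y lam x)
    (h₂ : ∀ x : Fin d → ℝ, lassoObjective B y lam x₂ ≤ lassoObjective B y lam x)
    (hG : ∀ i ∈ G, x₁ i = 0)
    (z₁ : Fin d → ℝ)
    (hz : ∀ i, (x₁ i ≠ 0 → z₁ i = Real.sign (x₁ i)) ∧ (x₁ i = 0 → |z₁ i| ≤ 1))
    (hopt : B.transpose.mulVec (B.mulVec x₁) - B.transpose.mulVec y + lam • z₁ = 0)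
    (hstrict : ∀ i ∈ G, |z₁ i| < 1) :
    ∀ i ∈ G, x₂ i = 0 := by
  -- notation
  have hFeq : lassoObjective B y lam x₁ = lassoObjective B y lam x₂ :=
    le_antisymm (h₁ x₂) (h₂ x₁)
  -- midpoint
  set xm : Fin d → ℝ := fun j => (x₁ j + x₂ j) / 2 with hxm
  have hmulm : ∀ i, B.mulVec xm i = (B.mulVec x₁ i + B.mulVec x₂ i) / 2 := by
    intro i
    simp only [Matrix.mulVec, dotProduct, hxm]
    rw [← Finset.sum_add_distrib, Finset.sum_div]
    apply Finset.sum_congr rfl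
    intro j _
    ring
  -- step 1 : B x₁ = B x₂
  have hBeq : B.mulVec x₁ = B.mulVec x₂ := by
    have key : lassoObjective B y lam xm ≤
        (lassoObjective B y lam x₁ + lassoObjective B y lam x₂) / 2
          - (1/8) * ∑ i, (B.mulVec x₂ i - B.mulVec x₁ i) ^ 2 := by
      unfold lassoObjective
      have hq : ∑ i, (y i - B.mulVec xm i) ^ 2 =
          ∑ i, ((y i - B.mulVec x₁ i) ^ 2 / 2 + (y i - B.mulVec x₂ i) ^ 2 / 2
            - (B.mulVec x₂ i - B.mulVec x₁ i) ^ 2 / 4) := by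
        apply Finset.sum_congr rfl
        intro i _
        rw [hmulm i]; ring
      have hl : ∑ j, |xm j| ≤ (∑ j, |x₁ j| + ∑ j, |x₂ j|) / 2 := by
        rw [← Finset.sum_add_distrib, Finset.sum_div]
        apply Finset.sum_le_sum
        intro j _
        simp only [hxm]
        rw [abs_div]
        have := abs_add_le (x₁ j) (x₂ j)
        have h2 : |(2:ℝ)| = 2 := by norm_num
        rw [h2]
        linarith
      rw [hq, Finset.sum_sub_distrib, Finset.sum_add_distrib]
      have := mul_le_mul_of_nonneg_left hl (le_of_lt hlam)
      rw [← Finset.sum_div, ← Finset.sum_div, ← Finset.sum_div]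
      nlinarith [this]
    have hge : lassoObjective B y lam x₁ ≤ lassoObjective B y lam xm := h₁ xm
    have hsum0 : ∑ i, (B.mulVec x₂ i - B.mulVec x₁ i) ^ 2 ≤ 0 := by
      nlinarith [key, hge, hFeq]
    have hsum0' : ∑ i, (B.mulVec x₂ i - B.mulVec x₁ i) ^ 2 = 0 :=
      le_antisymm hsum0 (Finset.sum_nonneg fun i _ => sq_nonneg _)
    funext i
    have : (B.mulVec x₂ i - B.mulVec x₁ i) ^ 2 = 0 := by
      have := (Finset.sum_eq_zero_iff_of_nonneg
        (fun i _ => sq_nonneg (B.mulVec x₂ i - B.mulVec x₁ i))).mp hsum0' i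
        (Finset.mem_univ i)
      exact this
    have := pow_eq_zero_iff (n := 2) (by norm_num) |>.mp this
    linarith [this]
  -- step 2 : equal ℓ¹ norms
  have hl1eq : ∑ j, |x₁ j| = ∑ j, |x₂ j| := by
    have : lam * ∑ j, |x₁ j| = lam * ∑ j, |x₂ j| := by
      have := hFeq
      unfold lassoObjective at this
      rw [hBeq] at this
      linarith
    exact mul_left_cancel₀ (ne_of_gt hlam) this
  -- optimality: lam * z₁ j = ∑ i, B i j * (y i - B.mulVec x₁ i)
  have hoptj : ∀ j, lam * z₁ j = ∑ i, B i j * (y i - B.mulVec x₁ i) := by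
    intro j
    have this := congrFun hopt j
    simp only [Pi.add_apply, Pi.sub_apply, Pi.smul_apply, smul_eq_mul, Pi.zero_apply] at this
    have hA : ∀ v : Fin N → ℝ, B.transpose.mulVec v j = ∑ i, B i j * v i := by
      intro v
      simp [Matrix.mulVec, dotProduct, Matrix.transpose_apply]
    rw [hA, hA] at this
    have h' : lam * z₁ j = ∑ i, B i j * y i - ∑ i, B i j * B.mulVec x₁ i := by
      linarith
    rw [h', ← Finset.sum_sub_distrib]
    apply Finset.sum_congr rfl
    intro i _
    ring
  -- ⟨z₁, x⟩ identity for any x via the residual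
  have hinner : ∀ x : Fin d → ℝ,
      lam * ∑ j, z₁ j * x j = ∑ i, (y i - B.mulVec x₁ i) * B.mulVec x i := by
    intro x
    rw [Finset.mul_sum]
    calc ∑ j, lam * (z₁ j * x j)
        = ∑ j, (∑ i, B i j * (y i - B.mulVec x₁ i)) * x j := by
          apply Finset.sum_congr rfl
          intro j _
          rw [← hoptj j]; ring
      _ = ∑ j, ∑ i, B i j * (y i - B.mulVec x₁ i) * x j := by
          apply Finset.sum_congr rfl
          intro j _
          rw [Finset.sum_mul]
      _ = ∑ i, ∑ j, B i j * (y i - B.mulVec x₁ i) * x j := Finset.sum_comm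
      _ = ∑ i, (y i - B.mulVec x₁ i) * B.mulVec x i := by
          apply Finset.sum_congr rfl
          intro i _
          simp only [Matrix.mulVec, dotProduct, Finset.mul_sum]
          apply Finset.sum_congr rfl
          intro j _
          ring
  -- ⟨z₁, x₁⟩ = ‖x₁‖₁
  have hzx1 : ∑ j, z₁ j * x₁ j = ∑ j, |x₁ j| := by
    apply Finset.sum_congr rfl
    intro j _
    by_cases h : x₁ j = 0
    · simp [h]
    · rw [(hz j).1 h]
      rcases lt_trichotomy (x₁ j) 0 with hlt | heq | hgt
      · rw [Real.sign_of_neg hlt, abs_of_neg hlt]; ring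
      · exact absurd heq h
      · rw [Real.sign_of_pos hgt, abs_of_pos hgt]; ring
  -- hence ⟨z₁, x₂⟩ = ‖x₂‖₁
  have hzx2 : ∑ j, z₁ j * x₂ j = ∑ j, |x₂ j| := by
    have h1 := hinner x₁
    have h2 := hinner x₂
    rw [← hBeq] at h2
    have : lam * ∑ j, z₁ j * x₂ j = lam * ∑ j, z₁ j * x₁ j := h2.trans h1.symm
    have heq := mul_left_cancel₀ (ne_of_gt hlam) this
    rw [heq, hzx1, hl1eq]
  -- |z₁ j| ≤ 1 for all j
  have hzle : ∀ j, |z₁ j| ≤ 1 := by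
    intro j
    by_cases h : x₁ j = 0
    · exact (hz j).2 h
    · rw [(hz j).1 h]
      rcases lt_trichotomy (x₁ j) 0 with hlt | heq | hgt
      · rw [Real.sign_of_neg hlt]; norm_num
      · exact absurd heq h
      · rw [Real.sign_of_pos hgt]; norm_num
  -- conclude
  intro i hi
  by_contra hne
  have hterm : ∀ j ∈ Finset.univ, z₁ j * x₂ j ≤ |x₂ j| := by
    intro j _
    calc z₁ j * x₂ j ≤ |z₁ j * x₂ j| := le_abs_self _
      _ = |z₁ j| * |x₂ j| := abs_mul _ _
      _ ≤ 1 * |x₂ j| := by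
          apply mul_le_mul_of_nonneg_right (hzle j) (abs_nonneg _)
      _ = |x₂ j| := one_mul _
  have hstricti : z₁ i * x₂ i < |x₂ i| := by
    calc z₁ i * x₂ i ≤ |z₁ i| * |x₂ i| := by
          rw [← abs_mul]; exact le_abs_self _
      _ < 1 * |x₂ i| := by
          apply mul_lt_mul_of_pos_right (hstrict i hi)
          exact abs_pos.mpr hne
      _ = |x₂ i| := one_mul _
  have : ∑ j, z₁ j * x₂ j < ∑ j, |x₂ j| :=
    Finset.sum_lt_sum hterm ⟨i, Finset.mem_univ i, hstricti⟩
  rw [hzx2] at this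
  exact lt_irrefl _ this
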